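/- arXiv:1509.00108 — 11 statements merged into one kernel-verified Lean document; each statement's English description precedes it below -/
import Mathlib

section
/- Let N be a real number with N ≥ 2. For every real number w with 0 < w < 1, one has (1 − w)·(w^{1/N − 1/2} − 1) + N·(1 − w^{1/2})·(1 − w^{1/N}) > 0. -/
theorem stmt_0 (N : ℝ) (hN : 2 ≤ N) :
    ∀ w : ℝ, 0 < w → w < 1 →
      (1 - w) * (w ^ (1 / N - 1 / 2 : ℝ) - 1)
        + N * (1 - w ^ (1 / 2 : ℝ)) * (1 - w ^ (1 / N : ℝ)) > 0 := by
  intro w hw hw1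
  have hNpos : (0:ℝ) < N := by linarith
  have hexp : (1 / N : ℝ) ≤ 1 / 2 := one_div_le_one_div_of_le two_pos hN
  have hb : w ^ (1/2:ℝ) < 1 := Real.rpow_lt_one hw.le hw1 (by norm_num)
  have ha : w ^ (1/N:ℝ) < 1 := Real.rpow_lt_one hw.le hw1 (by positivity)
  have hc : (1:ℝ) ≤ w ^ (1/N - 1/2 : ℝ) :=
    Real.one_le_rpow_of_pos_of_le_one_of_nonpos hw hw1.le (by linarith)
  nlinarith [mul_pos (mul_pos hNpos (sub_pos.mpr hb)) (sub_pos.mpr ha),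
    mul_nonneg (sub_pos.mpr hw1).le (sub_nonneg.mpr hc)]
end

section
/- Let N be a real number with N > 2. For every real number w with 0 < w < 1, one has (1 − w)·(1 + w^{1/N − 1/2}) − N·(1 + w^{1/2})·(1 − w^{1/N}) > 0. -/
open Real Set

/-- Strict Bernoulli consequence: for `0 < β < 1` and `0 < x < 1`,
`(2-β)*x - (1-β) < x^(2-β)`. -/
lemma bern_aux {β x : ℝ} (hβ1 : β < 1) (hx0 : 0 < x) (hx1 : x < 1) :
    (2 - β) * x - (1 - β) < x ^ (2 - β : ℝ) := by
  have h := one_add_mul_self_lt_rpow_one_add (s := x - 1) (by linarith) (by linarith)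
    (p := 2 - β) (by linarith)
  have hx : (1 : ℝ) + (x - 1) = x := by ring
  rw [hx] at h
  nlinarith [h]

/-- Key lemma: for `0 < β < 1` and `0 < x < 1`,
`β(1-x)(1 + x^(β-1)) - 2(1 - x^β) > 0`. -/
lemma key_aux {β : ℝ} (hβ0 : 0 < β) (hβ1 : β < 1) {x : ℝ} (hx0 : 0 < x) (hx1 : x < 1) :
    0 < β * (1 - x) * (1 + x ^ (β - 1 : ℝ)) - 2 * (1 - x ^ (β : ℝ)) := by
  set g : ℝ → ℝ := fun y => β * (1 - y) * (1 + y ^ (β - 1 : ℝ)) - 2 * (1 - y ^ (β : ℝ))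
    with hg
  have hderiv : ∀ y : ℝ, 0 < y → HasDerivAt g
      (β * (0 - 1) * (1 + y ^ (β - 1 : ℝ)) + β * (1 - y) * ((β - 1) * y ^ (β - 1 - 1 : ℝ))
        - 2 * (0 - β * y ^ (β - 1 : ℝ))) y := by
    intro y hy
    have h1 : HasDerivAt (fun y : ℝ => y ^ (β - 1 : ℝ)) ((β - 1) * y ^ (β - 1 - 1 : ℝ)) y :=
      Real.hasDerivAt_rpow_const (Or.inl hy.ne')
    have h2 : HasDerivAt (fun y : ℝ => y ^ (β : ℝ)) (β * y ^ (β - 1 : ℝ)) y :=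
      Real.hasDerivAt_rpow_const (Or.inl hy.ne')
    have hA : HasDerivAt (fun y : ℝ => β * (1 - y)) (β * (0 - 1)) y :=
      ((hasDerivAt_const y (1 : ℝ)).sub (hasDerivAt_id y)).const_mul β
    have hB : HasDerivAt (fun y : ℝ => 1 + y ^ (β - 1 : ℝ)) ((β - 1) * y ^ (β - 1 - 1 : ℝ)) y :=
      h1.const_add 1
    have hC : HasDerivAt (fun y : ℝ => 2 * (1 - y ^ (β : ℝ))) (2 * (0 - β * y ^ (β - 1 : ℝ))) y :=
      ((hasDerivAt_const y (1 : ℝ)).sub h2).const_mul 2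
    exact (hA.mul hB).sub hC
  have hDneg : ∀ y : ℝ, 0 < y → y < 1 →
      (β * (0 - 1) * (1 + y ^ (β - 1 : ℝ)) + β * (1 - y) * ((β - 1) * y ^ (β - 1 - 1 : ℝ))
        - 2 * (0 - β * y ^ (β - 1 : ℝ))) < 0 := by
    intro y hy0 hy1
    set a := y ^ (β - 1 : ℝ) with ha
    set b := y ^ (β - 1 - 1 : ℝ) with hbdef
    set c := y ^ (2 - β : ℝ) with hcdef
    have hc : (0 : ℝ) < c := Real.rpow_pos_of_pos hy0 _
    have e1 : a * c = y := by
      rw [ha, hcdef, ← Real.rpow_add hy0]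
      norm_num
    have e2 : b * c = 1 := by
      rw [hbdef, hcdef, ← Real.rpow_add hy0,
        show (β - 1 - 1 + (2 - β) : ℝ) = 0 by ring, Real.rpow_zero]
    have hb := bern_aux hβ1 hy0 hy1
    rw [← hcdef] at hb
    have hDc : (β * (0 - 1) * (1 + a) + β * (1 - y) * ((β - 1) * b) - 2 * (0 - β * a)) * c
        = β * (-c + (2 - β) * y - (1 - β)) := by
      linear_combination β * e1 + β * (1 - y) * (β - 1) * e2
    have hinner : 0 < β * (c - ((2 - β) * y - (1 - β))) := mul_pos hβ0 (by linarith)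
    have hD2 : (β * (0 - 1) * (1 + a) + β * (1 - y) * ((β - 1) * b) - 2 * (0 - β * a)) * c < 0 := by
      rw [hDc]; linarith
    by_contra h
    push_neg at h
    nlinarith [mul_nonneg h hc.le]
  have hanti : StrictAntiOn g (Icc x 1) := by
    apply strictAntiOn_of_deriv_neg (convex_Icc x 1)
    · intro y hy
      exact ((hderiv y (lt_of_lt_of_le hx0 hy.1)).continuousAt).continuousWithinAt
    · intro y hy
      rw [interior_Icc] at hy
      have hy0 : 0 < y := hx0.trans hy.1
      rw [(hderiv y hy0).deriv]
      exact hDneg y hy0 (hy.2)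
  have hmem1 : (1 : ℝ) ∈ Icc x 1 := ⟨hx1.le, le_refl 1⟩
  have hmemx : x ∈ Icc x 1 := ⟨le_refl x, hx1.le⟩
  have := hanti hmemx hmem1 hx1
  have hg1 : g 1 = 0 := by simp [hg, Real.one_rpow]
  rw [hg1] at this
  exact this

theorem stmt_1 (N : ℝ) (hN : 2 < N) :
    ∀ w : ℝ, 0 < w → w < 1 →
      (1 - w) * (1 + w ^ (1 / N - 1 / 2 : ℝ))
        - N * (1 + w ^ (1 / 2 : ℝ)) * (1 - w ^ (1 / N : ℝ)) > 0 := by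
  intro w hw0 hw1
  have hN0 : (0 : ℝ) < N := by linarith
  set β : ℝ := 2 / N with hβ
  have hβ0 : 0 < β := by positivity
  have hβ1 : β < 1 := by rw [hβ, div_lt_one hN0]; linarith
  set s : ℝ := w ^ (1 / 2 : ℝ) with hs
  set t : ℝ := w ^ (1 / N : ℝ) with ht
  have hs0 : 0 < s := Real.rpow_pos_of_pos hw0 _
  have hs1 : s < 1 := Real.rpow_lt_one hw0.le hw1 (by norm_num)
  have hw : s * s = w := by
    rw [hs, ← Real.rpow_add hw0]
    norm_num
  have hts : s ^ (β : ℝ) = t := by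
    rw [hs, ht, ← Real.rpow_mul hw0.le]
    congr 1
    rw [hβ]
    ring
  have hsb1 : s ^ (β - 1 : ℝ) = t / s := by
    rw [Real.rpow_sub hs0, hts, Real.rpow_one]
  have hsplit : w ^ (1 / N - 1 / 2 : ℝ) = t / s := by
    rw [Real.rpow_sub hw0, ← ht, ← hs]
  have hkey := key_aux hβ0 hβ1 hs0 hs1
  rw [hsb1, hts] at hkey
  have hNval : N = 2 / β := by
    rw [hβ]; field_simp
  rw [hsplit]
  have heq : (1 - w) * (1 + t / s) - N * (1 + s) * (1 - t)
      = (1 + s) * (β * (1 - s) * (1 + t / s) - 2 * (1 - t)) / β := by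
    rw [← hw, hNval]
    field_simp
    ring
  rw [heq]
  positivity
end

section
/- Let N be a real number with N > 2. For every real number w with 0 < w < 1, one has w^{1 − 1/N} − 2·(1 − 1/N)·w^{1/2} + 1 − 2/N > 0. -/
theorem stmt_2 (N : ℝ) (hN : 2 < N) :
    ∀ w : ℝ, 0 < w → w < 1 →
      w ^ (1 - 1 / N : ℝ) - 2 * (1 - 1 / N) * w ^ (1 / 2 : ℝ) + 1 - 2 / N > 0 := by
  intro w hw hw1
  have hN0 : (0:ℝ) < N := by linarith
  set p : ℝ := 2 * (1 - 1/N) with hp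
  have hp1 : 1 < p := by
    have : 1/N < 1/2 := by
      rw [div_lt_div_iff₀ hN0 two_pos]; linarith
    rw [hp]; linarith
  set t : ℝ := w ^ (1/2 : ℝ) with ht
  have ht0 : 0 < t := Real.rpow_pos_of_pos hw _
  have ht1 : t < 1 := Real.rpow_lt_one hw.le hw1 (by norm_num)
  have key := one_add_mul_self_lt_rpow_one_add (s := t - 1) (by linarith) (by intro h; nlinarith) hp1
  have h1 : (1:ℝ) + (t - 1) = t := by ring
  rw [h1] at key
  have htp : t ^ p = w ^ (1 - 1/N : ℝ) := by
    rw [ht, ← Real.rpow_mul hw.le, hp]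
    ring_nf
  have h2 : 2/N = 2 - p := by rw [hp]; ring
  rw [← htp, h2]
  nlinarith [key]
end

section
/- Let N and m be integers with N ≥ 2 and 0 ≤ m ≤ N − 2. For every real number φ with m·π/(2·(N − 1)) < φ < π/2, one has sin((2φ + m·π)/N) > (1/N)·sin(2φ). -/
lemma aux_concave (X t : ℝ) (hX0 : 0 < X) (hXpi : X ≤ Real.pi)
    (ht0 : 0 < t) (ht1 : t < 1) : t * Real.sin X < Real.sin (t * X) := by
  have h := strictConcaveOn_sin_Icc.2
    (show (0:ℝ) ∈ Set.Icc 0 Real.pi by simp [Real.pi_nonneg])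
    (show X ∈ Set.Icc 0 Real.pi from ⟨hX0.le, hXpi⟩)
    hX0.ne (show (0:ℝ) < 1 - t by linarith) ht0 (by ring)
  simpa using h

theorem stmt_4 (N m : ℤ) (hN : 2 ≤ N) (hm0 : 0 ≤ m) (hm : m ≤ N - 2) :
    ∀ φ : ℝ, (m : ℝ) * Real.pi / (2 * ((N : ℝ) - 1)) < φ → φ < Real.pi / 2 →
      Real.sin ((2 * φ + (m : ℝ) * Real.pi) / (N : ℝ))
        > (1 / (N : ℝ)) * Real.sin (2 * φ) := by
  intro φ h1 h2
  have hNr : (2:ℝ) ≤ (N:ℝ) := by exact_mod_cast hN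
  have hmr : (0:ℝ) ≤ (m:ℝ) := by exact_mod_cast hm0
  have hmN : (m:ℝ) ≤ (N:ℝ) - 2 := by exact_mod_cast hm
  have hpi := Real.pi_pos
  have hNpos : (0:ℝ) < (N:ℝ) := by linarith
  have hφ0 : 0 < φ := by
    refine lt_of_le_of_lt ?_ h1
    have : (0:ℝ) < 2 * ((N:ℝ) - 1) := by linarith
    positivity
  have h2φ : 2 * φ < Real.pi := by linarith
  have hs : 0 < Real.sin (2 * φ) := Real.sin_pos_of_pos_of_lt_pi (by linarith) h2φ
  set a := (2 * φ + (m:ℝ) * Real.pi) / (N:ℝ) with ha_def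
  have hNa : (N:ℝ) * a = 2 * φ + (m:ℝ) * Real.pi := by
    rw [ha_def]; field_simp [hNpos.ne']
  have ha0 : 0 < a := by
    apply div_pos (by nlinarith) hNpos
  have hapi : a < Real.pi := by
    rw [ha_def, div_lt_iff₀ hNpos]
    nlinarith
  show Real.sin a > (1 / (N:ℝ)) * Real.sin (2 * φ)
  by_cases hA : a ≤ Real.pi / 2
  · by_cases hB : 2 * φ ≤ a
    · have hmono : Real.sin (2 * φ) ≤ Real.sin a := by
        apply Real.strictMonoOn_sin.monotoneOn
        · constructor <;> [linarith; linarith]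
        · constructor <;> [linarith; linarith]
        · exact hB
      have : (1 / (N:ℝ)) * Real.sin (2 * φ) < Real.sin (2 * φ) := by
        rw [div_mul_eq_mul_div, div_lt_iff₀ hNpos]
        nlinarith
      linarith
    · push_neg at hB
      have hconc := aux_concave (2 * φ) (a / (2 * φ)) (by linarith) h2φ.le
        (div_pos ha0 (by linarith)) ((div_lt_one (by linarith)).mpr hB)
      rw [div_mul_cancel₀ _ (by linarith : (2:ℝ) * φ ≠ 0)] at hconc
      have ht : (1 / (N:ℝ)) ≤ a / (2 * φ) := by
        rw [div_le_div_iff₀ hNpos (by linarith)]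
        nlinarith
      calc (1 / (N:ℝ)) * Real.sin (2 * φ) ≤ a / (2 * φ) * Real.sin (2 * φ) :=
            mul_le_mul_of_nonneg_right ht hs.le
        _ < Real.sin a := hconc
  · push_neg at hA
    have hsin_eq : Real.sin a = Real.sin (Real.pi - a) := (Real.sin_pi_sub a).symm
    set b := Real.pi - a with hb_def
    have hb0 : 0 < b := by simp [hb_def]; linarith
    have hbhalf : b < Real.pi / 2 := by simp [hb_def]; linarith
    have hNb : 2 * φ < (N:ℝ) * b := by
      have hb : (N:ℝ) * b = (N:ℝ) * Real.pi - (N:ℝ) * a := by rw [hb_def]; ring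
      nlinarith [hNa, mul_nonneg (by linarith : (0:ℝ) ≤ (N:ℝ) - 2 - m) hpi.le]
    rw [hsin_eq]
    by_cases hB : 2 * φ ≤ b
    · have hmono : Real.sin (2 * φ) ≤ Real.sin b := by
        apply Real.strictMonoOn_sin.monotoneOn
        · constructor <;> [linarith; linarith]
        · constructor <;> [linarith; linarith]
        · exact hB
      have : (1 / (N:ℝ)) * Real.sin (2 * φ) < Real.sin (2 * φ) := by
        rw [div_mul_eq_mul_div, div_lt_iff₀ hNpos]
        nlinarith
      linarith
    · push_neg at hB
      have hconc := aux_concave (2 * φ) (b / (2 * φ)) (by linarith) h2φ.le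
        (div_pos hb0 (by linarith)) ((div_lt_one (by linarith)).mpr hB)
      rw [div_mul_cancel₀ _ (by linarith : (2:ℝ) * φ ≠ 0)] at hconc
      have ht : (1 / (N:ℝ)) < b / (2 * φ) := by
        rw [div_lt_div_iff₀ hNpos (by linarith)]
        nlinarith
      calc (1 / (N:ℝ)) * Real.sin (2 * φ) < b / (2 * φ) * Real.sin (2 * φ) :=
            mul_lt_mul_of_pos_right ht hs
        _ < Real.sin b := hconc
end

section
/- Let N and m be integers with N ≥ 3 and 1 ≤ m ≤ N − 2. For every real number φ with 0 < φ < π, one has sin((2φ + m·π)/N) > (2/N)·sin(φ)·cos(φ − (2φ + m·π)/N). -/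
open Real

lemma abs_sin_add_le (a b : ℝ) : |Real.sin (a + b)| ≤ |Real.sin a| + |Real.sin b| := by
  rw [Real.sin_add]
  calc |Real.sin a * Real.cos b + Real.cos a * Real.sin b|
      ≤ |Real.sin a * Real.cos b| + |Real.cos a * Real.sin b| := abs_add_le _ _
    _ ≤ |Real.sin a| + |Real.sin b| := by
        rw [abs_mul, abs_mul]
        have h1 := Real.abs_cos_le_one b
        have h2 := Real.abs_cos_le_one a
        have h3 := abs_nonneg (Real.sin a)
        have h4 := abs_nonneg (Real.sin b)
        nlinarith

lemma abs_sin_nat_mul_le (n : ℕ) (x : ℝ) : |Real.sin (n * x)| ≤ n * |Real.sin x| := by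
  induction n with
  | zero => simp
  | succ k ih =>
      have : ((k : ℝ) + 1) * x = (k : ℝ) * x + x := by ring
      push_cast
      rw [this]
      calc |Real.sin ((k : ℝ) * x + x)| ≤ |Real.sin ((k : ℝ) * x)| + |Real.sin x| :=
            abs_sin_add_le _ _
        _ ≤ (k : ℝ) * |Real.sin x| + |Real.sin x| := by linarith
        _ = ((k : ℝ) + 1) * |Real.sin x| := by ring

lemma sin_nat_mul_lt (k : ℕ) (hk : 2 ≤ k) (x : ℝ) (hx0 : 0 < x) (hx : x < π / 2) :
    Real.sin (k * x) < k * Real.sin x := by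
  have hsin : 0 < Real.sin x := Real.sin_pos_of_pos_of_lt_pi hx0 (by linarith [Real.pi_pos])
  have hcos0 : 0 < Real.cos x := Real.cos_pos_of_mem_Ioo ⟨by linarith, hx⟩
  have hcos1 : Real.cos x < 1 := by
    nlinarith [Real.sin_sq_add_cos_sq x]
  have hk2 : ((k : ℝ) * x) = ((k - 2 : ℕ) : ℝ) * x + 2 * x := by
    have : ((k - 2 : ℕ) : ℝ) = (k : ℝ) - 2 := by
      push_cast [Nat.cast_sub hk]; ring
    rw [this]; ring
  calc Real.sin ((k : ℝ) * x) ≤ |Real.sin ((k : ℝ) * x)| := le_abs_self _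
    _ ≤ |Real.sin (((k - 2 : ℕ) : ℝ) * x)| + |Real.sin (2 * x)| := by
        rw [hk2]; exact abs_sin_add_le _ _
    _ ≤ ((k - 2 : ℕ) : ℝ) * |Real.sin x| + |Real.sin (2 * x)| := by
        linarith [abs_sin_nat_mul_le (k - 2) x]
    _ = ((k - 2 : ℕ) : ℝ) * Real.sin x + 2 * Real.sin x * Real.cos x := by
        rw [Real.sin_two_mul, abs_of_pos hsin, abs_of_pos (by positivity)]
    _ < ((k - 2 : ℕ) : ℝ) * Real.sin x + 2 * Real.sin x := by nlinarith
    _ = (k : ℝ) * Real.sin x := by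
        have : ((k - 2 : ℕ) : ℝ) = (k : ℝ) - 2 := by push_cast [Nat.cast_sub hk]; ring
        rw [this]; ring

theorem stmt_6 (N m : ℤ) (hN : 3 ≤ N) (hm1 : 1 ≤ m) (hm : m ≤ N - 2) :
    ∀ φ : ℝ, 0 < φ → φ < Real.pi →
      Real.sin ((2 * φ + (m : ℝ) * Real.pi) / (N : ℝ))
        > (2 / (N : ℝ)) * Real.sin φ
            * Real.cos (φ - (2 * φ + (m : ℝ) * Real.pi) / (N : ℝ)) := by
  intro φ hφ0 hφπ
  have hπ := Real.pi_pos
  have hNR : (3 : ℝ) ≤ (N : ℝ) := by exact_mod_cast hN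
  have hNpos : (0 : ℝ) < (N : ℝ) := by linarith
  have hmR1 : (1 : ℝ) ≤ (m : ℝ) := by exact_mod_cast hm1
  have hmR : (m : ℝ) ≤ (N : ℝ) - 2 := by
    have : (m : ℝ) ≤ ((N - 2 : ℤ) : ℝ) := by exact_mod_cast hm
    push_cast at this; linarith
  set θ : ℝ := (2 * φ + (m : ℝ) * π) / (N : ℝ) with hθdef
  -- identity: 2 sin φ cos (φ - θ) = sin (2φ - θ) + sin θ
  have hident : Real.sin (2 * φ - θ) + Real.sin θ = 2 * Real.sin φ * Real.cos (φ - θ) := by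
    have h1 : Real.sin (2 * φ - θ)
        = Real.sin φ * Real.cos (φ - θ) + Real.cos φ * Real.sin (φ - θ) := by
      rw [← Real.sin_add]; congr 1; ring
    have h2 : Real.sin θ
        = Real.sin φ * Real.cos (φ - θ) - Real.cos φ * Real.sin (φ - θ) := by
      rw [← Real.sin_sub]; congr 1; ring
    rw [h1, h2]; ring
  -- bounds on θ
  have hθlo : π / (N : ℝ) < θ := by
    rw [hθdef, div_lt_div_iff₀ hNpos hNpos]
    nlinarith [mul_pos hφ0 hNpos, mul_nonneg (show (0:ℝ) ≤ (m:ℝ) * π - π by nlinarith) hNpos.le]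
  have hθup : θ < ((m : ℝ) + 2) * π / (N : ℝ) := by
    rw [hθdef, div_lt_div_iff₀ hNpos hNpos]
    nlinarith [mul_pos (show (0:ℝ) < π - φ by linarith) hNpos]
  have hθπ : θ < π := by
    have : ((m : ℝ) + 2) * π / (N : ℝ) ≤ π := by
      rw [div_le_iff₀ hNpos]; nlinarith
    linarith
  have hθ0 : 0 < θ := lt_trans (by positivity) hθlo
  -- main reduction
  suffices hmain : Real.sin (2 * φ - θ) + Real.sin θ < (N : ℝ) * Real.sin θ by
    rw [gt_iff_lt,
      show (2 / (N : ℝ)) * Real.sin φ * Real.cos (φ - θ)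
        = (Real.sin (2 * φ - θ) + Real.sin θ) / (N : ℝ) from by rw [hident]; ring,
      div_lt_iff₀ hNpos]
    linarith
  by_cases hcase : θ ≤ π - π / (N : ℝ)
  · -- sin θ ≥ 2 / N
    have hs : 2 / (N : ℝ) ≤ Real.sin θ := by
      rcases le_or_gt θ (π / 2) with h | h
      · have := Real.mul_le_sin (le_of_lt hθ0) h
        have h2 : 2 / π * (π / (N : ℝ)) ≤ 2 / π * θ := by
          apply mul_le_mul_of_nonneg_left (le_of_lt hθlo) (by positivity)
        calc 2 / (N : ℝ) = 2 / π * (π / (N : ℝ)) := by field_simp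
          _ ≤ 2 / π * θ := h2
          _ ≤ Real.sin θ := this
      · have hx0 : 0 ≤ π - θ := by linarith
        have hx2 : π - θ ≤ π / 2 := by linarith
        have := Real.mul_le_sin hx0 hx2
        rw [Real.sin_pi_sub] at this
        have h2 : 2 / π * (π / (N : ℝ)) ≤ 2 / π * (π - θ) := by
          apply mul_le_mul_of_nonneg_left (by linarith) (by positivity)
        calc 2 / (N : ℝ) = 2 / π * (π / (N : ℝ)) := by field_simp
          _ ≤ 2 / π * (π - θ) := h2
          _ ≤ Real.sin θ := this
    have h1 : Real.sin (2 * φ - θ) ≤ 1 := Real.sin_le_one _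
    have hkey : (1 : ℝ) < ((N : ℝ) - 1) * (2 / (N : ℝ)) := by
      rw [show ((N : ℝ) - 1) * (2 / (N : ℝ)) = (2 * (N : ℝ) - 2) / (N : ℝ) from by ring,
        lt_div_iff₀ hNpos]
      linarith
    nlinarith [mul_le_mul_of_nonneg_left hs (show (0:ℝ) ≤ (N : ℝ) - 1 by linarith)]
  · -- θ > π - π/N forces m = N - 2
    push_neg at hcase
    have hmN : m = N - 2 := by
      have h1 : π - π / (N : ℝ) < ((m : ℝ) + 2) * π / (N : ℝ) := lt_trans hcase hθup
      have hπN : 0 < π / (N : ℝ) := by positivity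
      have h2 : ((N : ℝ) - 1) < (m : ℝ) + 2 := by
        have e1 : π - π / (N : ℝ) = ((N : ℝ) - 1) * (π / (N : ℝ)) := by field_simp
        have e2 : ((m : ℝ) + 2) * π / (N : ℝ) = ((m : ℝ) + 2) * (π / (N : ℝ)) := by ring
        rw [e1, e2] at h1
        exact lt_of_mul_lt_mul_right h1 hπN.le
      have : (N : ℤ) - 1 < m + 2 := by exact_mod_cast (by push_cast; linarith : ((N - 1 : ℤ) : ℝ) < ((m + 2 : ℤ) : ℝ))
      omega
    subst hmN
    set x : ℝ := π - θ with hxdef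
    have hx0 : 0 < x := by rw [hxdef]; linarith
    have hxN : x < π / (N : ℝ) := by rw [hxdef]; linarith
    have hxhalf : x < π / 2 := by
      have : π / (N : ℝ) ≤ π / 3 := by
        apply div_le_div_of_nonneg_left (le_of_lt hπ) (by norm_num) hNR
      linarith
    -- x = 2(π - φ)/N and 2φ - θ = π - (N-1) x
    have hxval : (N : ℝ) * x = 2 * (π - φ) := by
      rw [hxdef, hθdef]
      push_cast
      field_simp
      ring
    have hang : 2 * φ - θ = π - ((N : ℝ) - 1) * x := by
      rw [hxdef]; nlinarith [hxval]
    have hθx : θ = π - x := by rw [hxdef]; ring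
    have hsinθ : Real.sin θ = Real.sin x := by rw [hθx, Real.sin_pi_sub]
    set k : ℕ := (N - 1).toNat with hkdef
    have hkR : (k : ℝ) = (N : ℝ) - 1 := by
      have : ((N - 1 : ℤ) : ℝ) = (N : ℝ) - 1 := by push_cast; ring
      rw [hkdef, ← this]
      exact_mod_cast congrArg Int.cast (Int.toNat_of_nonneg (by omega))
    have hk2 : 2 ≤ k := by
      have : (2 : ℝ) ≤ (k : ℝ) := by rw [hkR]; linarith
      exact_mod_cast this
    have hlt : Real.sin ((k : ℝ) * x) < (k : ℝ) * Real.sin x :=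
      sin_nat_mul_lt k hk2 x hx0 hxhalf
    have hsin2 : Real.sin (2 * φ - θ) = Real.sin ((k : ℝ) * x) := by
      rw [hang, ← hkR, Real.sin_pi_sub]
    rw [hsin2, hsinθ]
    have hsx : 0 < Real.sin x := Real.sin_pos_of_pos_of_lt_pi hx0 (by linarith)
    nlinarith [hlt]
end

section
/- Let N be a real number with N > 2. Then (N/π)·arctan(√(N − 1)) < (N − 1)/2. -/
open Real

lemma aux_deriv_f (s : ℝ) :
    HasDerivAt (fun s : ℝ => Real.arctan s - s / (1 + s^2))
      (2 * s^2 / (1 + s^2)^2) s := by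
  have hne : (1 : ℝ) + s^2 ≠ 0 := by positivity
  have h1 : HasDerivAt (fun s : ℝ => s / (1 + s^2))
      ((1 * (1 + s^2) - s * (2 * s)) / (1 + s^2)^2) s := by
    have hden : HasDerivAt (fun s : ℝ => 1 + s^2) (2 * s) s := by
      simpa using (hasDerivAt_pow 2 s).const_add 1
    exact (hasDerivAt_id' s).div hden hne
  have := (Real.hasDerivAt_arctan s).sub h1
  refine this.congr_deriv ?_
  field_simp
  ring

lemma lowA (t : ℝ) (h0 : 0 < t) : t / (1 + t^2) < Real.arctan t := by
  have hmono : StrictMonoOn (fun s : ℝ => Real.arctan s - s / (1 + s^2)) (Set.Icc 0 t) := by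
    apply strictMonoOn_of_deriv_pos (convex_Icc 0 t)
    · exact fun s _ => ((aux_deriv_f s).continuousAt).continuousWithinAt
    · intro s hs
      rw [interior_Icc] at hs
      rw [(aux_deriv_f s).deriv]
      have : 0 < s := hs.1
      positivity
  have := hmono (Set.left_mem_Icc.2 h0.le) (Set.right_mem_Icc.2 h0.le) h0
  simpa using this

lemma aux_deriv_h (s : ℝ) :
    HasDerivAt (fun s : ℝ => Real.arctan s - Real.pi / 2 * s^2 / (1 + s^2))
      ((1 + s^2 - Real.pi * s) / (1 + s^2)^2) s := by
  have hne : (1 : ℝ) + s^2 ≠ 0 := by positivity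
  have h1 : HasDerivAt (fun s : ℝ => Real.pi / 2 * s^2 / (1 + s^2))
      ((Real.pi / 2 * (2 * s) * (1 + s^2) - Real.pi / 2 * s^2 * (2 * s)) / (1 + s^2)^2) s := by
    have hnum : HasDerivAt (fun s : ℝ => Real.pi / 2 * s^2) (Real.pi / 2 * (2 * s)) s := by
      simpa using (hasDerivAt_pow 2 s).const_mul (Real.pi / 2)
    have hden : HasDerivAt (fun s : ℝ => 1 + s^2) (2 * s) s := by
      simpa using (hasDerivAt_pow 2 s).const_add 1
    exact hnum.div hden hne
  have := (Real.hasDerivAt_arctan s).sub h1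
  refine this.congr_deriv ?_
  field_simp
  ring

lemma key (t : ℝ) (h0 : 0 < t) (h1 : t < 1) :
    Real.pi / 2 * t^2 / (1 + t^2) < Real.arctan t := by
  have hπ := Real.pi_pos
  rcases le_or_gt t (2 / Real.pi) with hc | hc
  · have h2 : Real.pi / 2 * t^2 / (1 + t^2) ≤ t / (1 + t^2) := by
      have hπt : Real.pi * t ≤ 2 := by
        rw [le_div_iff₀ hπ] at hc; linarith
      have h3 : Real.pi / 2 * t^2 ≤ t := by nlinarith
      exact div_le_div_of_nonneg_right h3 (by positivity)
    exact h2.trans_lt (lowA t h0)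
  · -- t ∈ (2/π, 1): h strictly anti on [2/π, 1], h t > h 1 = 0
    have hanti : StrictAntiOn (fun s : ℝ => Real.arctan s - Real.pi / 2 * s^2 / (1 + s^2))
        (Set.Icc (2 / Real.pi) 1) := by
      apply strictAntiOn_of_deriv_neg (convex_Icc _ _)
      · exact fun s _ => ((aux_deriv_h s).continuousAt).continuousWithinAt
      · intro s hs
        rw [interior_Icc] at hs
        rw [(aux_deriv_h s).deriv]
        have hs1 : 2 / Real.pi < s := hs.1
        have hs2 : s < 1 := hs.2
        have hnum : 1 + s^2 - Real.pi * s < 0 := by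
          have hp : (2 : ℝ) < Real.pi * s := by
            rw [div_lt_iff₀ hπ] at hs1; linarith [mul_comm Real.pi s]
          nlinarith
        have : (0:ℝ) < (1 + s^2)^2 := by positivity
        exact div_neg_of_neg_of_pos hnum this
    have hmem1 : t ∈ Set.Icc (2 / Real.pi) 1 := ⟨hc.le, h1.le⟩
    have hmem2 : (1:ℝ) ∈ Set.Icc (2 / Real.pi) 1 := by
      constructor
      · rw [div_le_one hπ]; linarith [Real.pi_gt_three]
      · exact le_refl 1
    have := hanti hmem1 hmem2 h1
    simp only [Real.arctan_one] at this
    have h14 : Real.pi / 2 * 1^2 / (1 + 1^2) = Real.pi / 4 := by ring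
    rw [h14] at this
    linarith

theorem stmt_8 (N : ℝ) (hN : 2 < N) :
    (N / Real.pi) * Real.arctan (Real.sqrt (N - 1)) < (N - 1) / 2 := by
  have hπ := Real.pi_pos
  set x := Real.sqrt (N - 1) with hxdef
  have hx1 : 1 < x := by
    have : Real.sqrt 1 < Real.sqrt (N - 1) := Real.sqrt_lt_sqrt (by norm_num) (by linarith)
    simpa using this
  have hx0 : 0 < x := by linarith
  have hxsq : x^2 = N - 1 := Real.sq_sqrt (by linarith)
  have ht0 : 0 < x⁻¹ := by positivity
  have ht1 : x⁻¹ < 1 := by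
    rw [inv_lt_one_iff₀]; right; exact hx1
  have hkey := key x⁻¹ ht0 ht1
  have harc : Real.arctan x⁻¹ = Real.pi / 2 - Real.arctan x := Real.arctan_inv_of_pos hx0
  rw [harc] at hkey
  -- arctan x < π/2 - (π/2) t²/(1+t²)
  have hub : Real.arctan x < Real.pi / 2 - Real.pi / 2 * x⁻¹^2 / (1 + x⁻¹^2) := by linarith
  have hN0 : 0 < N := by linarith
  have step : (N / Real.pi) * Real.arctan x <
      (N / Real.pi) * (Real.pi / 2 - Real.pi / 2 * x⁻¹^2 / (1 + x⁻¹^2)) := by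
    exact mul_lt_mul_of_pos_left hub (by positivity)
  have hteq : x⁻¹^2 = 1 / (N - 1) := by
    rw [inv_pow, hxsq]
    simp [one_div]
  have hfin : (N / Real.pi) * (Real.pi / 2 - Real.pi / 2 * x⁻¹^2 / (1 + x⁻¹^2)) = (N - 1) / 2 := by
    rw [hteq]
    have h1 : N - 1 ≠ 0 := by linarith
    field_simp
    rw [sub_add_cancel, mul_sub, mul_one_div_cancel hN0.ne', mul_one]
  linarith [step, hfin ▸ step]
end

section
/- For every integer N with 2 ≤ N ≤ 21 one has ⌊(N − 1)/2 − (N/π)·arctan(√(N − 1))⌋ = 0, while ⌊(22 − 1)/2 − (22/π)·arctan(√(22 − 1))⌋ = 1. Consequently, 22 is the smallest integer N ≥ 2 for which the quantity N_missing = 2·⌊(N − 1)/2 − (N/π)·arctan(√(N − 1))⌋ is nonzero. -/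
open Real

lemma arctan_le_self' {x : ℝ} (hx : 0 ≤ x) : Real.arctan x ≤ x := by
  have h1 : Real.arctan x ≤ Real.tan (Real.arctan x) :=
    Real.le_tan (by simpa using Real.arctan_strictMono.monotone hx) (Real.arctan_lt_pi_div_two x)
  rwa [Real.tan_arctan] at h1

lemma arctan_ge_cubic {t : ℝ} (ht : 0 ≤ t) : t - t ^ 3 / 3 ≤ Real.arctan t := by
  have h : ∀ x : ℝ, HasDerivAt (fun y => Real.arctan y - y + y ^ 3 / 3) (x ^ 4 / (1 + x ^ 2)) x := by
    intro x
    have h1 : HasDerivAt Real.arctan (1 / (1 + x ^ 2)) x := Real.hasDerivAt_arctan x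
    have h2 : HasDerivAt (fun y : ℝ => y) 1 x := hasDerivAt_id x
    have h3 : HasDerivAt (fun y : ℝ => y ^ 3 / 3) ((3 : ℕ) * x ^ 2 / 3) x :=
      (hasDerivAt_pow 3 x).div_const 3
    have hx : (0:ℝ) < 1 + x ^ 2 := by positivity
    refine ((h1.sub h2).add h3).congr_deriv ?_
    field_simp
    ring
  have mono : MonotoneOn (fun y => Real.arctan y - y + y ^ 3 / 3) (Set.Ici (0:ℝ)) := by
    apply monotoneOn_of_deriv_nonneg (convex_Ici 0)
    · exact Continuous.continuousOn (by continuity)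
    · exact fun x _ => (h x).differentiableAt.differentiableWithinAt
    · intro x _
      rw [(h x).deriv]
      positivity
  have := mono Set.self_mem_Ici ht ht
  simp only [Real.arctan_zero] at this
  linarith

lemma floor_eq_k (N : ℝ) (h1 : 1 < N) (k : ℤ)
    (hlo : π * (2 * k + 1) / (2 * N) ≤ arctan (Real.sqrt (N - 1))⁻¹)
    (hhi : arctan (Real.sqrt (N - 1))⁻¹ < π * (2 * k + 3) / (2 * N)) :
    ⌊(N - 1) / 2 - (N / π) * arctan (Real.sqrt (N - 1))⌋ = k := by
  have hs : 0 < Real.sqrt (N - 1) := Real.sqrt_pos.mpr (by linarith)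
  have hπ : (0:ℝ) < π := pi_pos
  set a := arctan (Real.sqrt (N - 1))⁻¹ with ha
  have hrw : arctan (Real.sqrt (N - 1)) = π / 2 - a := by
    rw [ha, arctan_inv_of_pos hs]; ring
  have e : (N - 1) / 2 - (N / π) * arctan (Real.sqrt (N - 1)) = (N / π) * a - 1 / 2 := by
    rw [hrw]; field_simp; ring
  rw [e, Int.floor_eq_iff]
  have hN0 : (0:ℝ) < N := by linarith
  have hNπ : (0:ℝ) < N / π := div_pos hN0 hπ
  constructor
  · have h2 := mul_le_mul_of_nonneg_left hlo hNπ.le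
    have h3 : (N / π) * (π * (2 * (k:ℝ) + 1) / (2 * N)) = (k:ℝ) + 1 / 2 := by
      field_simp
    rw [h3] at h2
    linarith
  · have h2 := mul_lt_mul_of_pos_left hhi hNπ
    have h3 : (N / π) * (π * (2 * (k:ℝ) + 3) / (2 * N)) = (k:ℝ) + 3 / 2 := by
      field_simp
    rw [h3] at h2
    linarith

lemma floor_zero_mid (N : ℝ) (h3 : 3 ≤ N) (h21 : N ≤ 21) :
    ⌊(N - 1) / 2 - (N / π) * arctan (Real.sqrt (N - 1))⌋ = 0 := by
  have hs : 0 < Real.sqrt (N - 1) := Real.sqrt_pos.mpr (by linarith)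
  have hs2 : Real.sqrt (N - 1) ^ 2 = N - 1 := Real.sq_sqrt (by linarith)
  set s := Real.sqrt (N - 1) with hsdef
  apply floor_eq_k N (by linarith) 0
  · have key := arctan_ge_cubic (inv_nonneg.mpr hs.le)
    refine le_trans ?_ key
    have e : s⁻¹ - (s⁻¹) ^ 3 / 3 = (3 * s ^ 2 - 1) / (3 * s ^ 3) := by
      field_simp
    rw [e, div_le_div_iff₀ (by positivity) (by positivity)]
    have hπ : π < 3.15 := pi_lt_d2
    push_cast
    nlinarith [sq_nonneg (s - 2), sq_nonneg (s - 1.5), mul_pos hs hs, hs.le,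
      sq_nonneg (s * (s - 2)), sq_nonneg (s * s - 2 * s), mul_pos (mul_pos hs hs) hs]
  · have key := arctan_le_self' (inv_nonneg.mpr hs.le)
    refine lt_of_le_of_lt key ?_
    rw [inv_eq_one_div, div_lt_div_iff₀ hs (by linarith : (0:ℝ) < 2 * N)]
    have hπ : (3.141592:ℝ) < π := pi_gt_d6
    have hπ2 : (9.8696:ℝ) < π ^ 2 := by nlinarith
    have hsq : 4 * N ^ 2 < 9 * π ^ 2 * s ^ 2 := by
      rw [hs2]
      nlinarith [mul_nonneg (by linarith : (0:ℝ) ≤ N - 3) (by linarith : (0:ℝ) ≤ 21 - N)]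
    push_cast
    nlinarith [mul_pos hs (by linarith : (0:ℝ) < π), sq_nonneg (π * (2 * 0 + 3) * s - 2 * N)]

lemma floor_two : ⌊((2:ℝ) - 1) / 2 - ((2:ℝ) / π) * arctan (Real.sqrt ((2:ℝ) - 1))⌋ = 0 := by
  have h : Real.sqrt ((2:ℝ) - 1) = 1 := by norm_num
  rw [h, Real.arctan_one]
  have hπ : (π:ℝ) ≠ 0 := pi_ne_zero
  have : ((2:ℝ) - 1) / 2 - (2 / π) * (π / 4) = 0 := by field_simp; ring
  rw [this, Int.floor_zero]

lemma floor_22 : ⌊((22:ℝ) - 1) / 2 - ((22:ℝ) / π) * arctan (Real.sqrt ((22:ℝ) - 1))⌋ = 1 := by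
  have hs : 0 < Real.sqrt ((22:ℝ) - 1) := Real.sqrt_pos.mpr (by norm_num)
  have hs2 : Real.sqrt ((22:ℝ) - 1) ^ 2 = 21 := by
    rw [Real.sq_sqrt]; norm_num; norm_num
  set s := Real.sqrt ((22:ℝ) - 1) with hsdef
  apply floor_eq_k 22 (by norm_num) 1
  · have key := arctan_ge_cubic (inv_nonneg.mpr hs.le)
    refine le_trans ?_ key
    have e : s⁻¹ - (s⁻¹) ^ 3 / 3 = (3 * s ^ 2 - 1) / (3 * s ^ 3) := by
      field_simp
    rw [e, div_le_div_iff₀ (by positivity) (by positivity)]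
    have hπ : π < 3.141593 := pi_lt_d6
    have hsle : s ≤ 4.5826 := by nlinarith [sq_nonneg (s - 4.5826)]
    push_cast
    nlinarith [mul_pos hs hs, mul_nonneg (by linarith : (0:ℝ) ≤ 3.141593 - π) hs.le]
  · have key := arctan_le_self' (inv_nonneg.mpr hs.le)
    refine lt_of_le_of_lt key ?_
    rw [inv_eq_one_div, div_lt_div_iff₀ hs (by norm_num : (0:ℝ) < 2 * 22)]
    have hπ : (3.14:ℝ) < π := pi_gt_d2
    have hsgt : (4.58:ℝ) < s := by nlinarith [hs.le]
    push_cast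
    nlinarith [mul_pos hs (by linarith : (0:ℝ) < π)]

lemma floor_all (N : ℤ) (h2 : 2 ≤ N) (h21 : N ≤ 21) :
    ⌊((N : ℝ) - 1) / 2 - ((N : ℝ) / Real.pi) * Real.arctan (Real.sqrt ((N : ℝ) - 1))⌋ = 0 := by
  by_cases hN : N = 2
  · subst hN
    exact_mod_cast floor_two
  · have h3 : 3 ≤ N := by omega
    have h3' : (3:ℝ) ≤ (N:ℝ) := by exact_mod_cast h3
    have h21' : (N:ℝ) ≤ 21 := by exact_mod_cast h21
    exact floor_zero_mid _ h3' h21'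

theorem stmt_9 :
    (∀ N : ℤ, 2 ≤ N → N ≤ 21 →
        ⌊((N : ℝ) - 1) / 2 - ((N : ℝ) / Real.pi) * Real.arctan (Real.sqrt ((N : ℝ) - 1))⌋ = 0)
    ∧ ⌊((22 : ℝ) - 1) / 2 - ((22 : ℝ) / Real.pi) * Real.arctan (Real.sqrt ((22 : ℝ) - 1))⌋ = 1
    ∧ IsLeast {N : ℤ | 2 ≤ N ∧
        2 * ⌊((N : ℝ) - 1) / 2 - ((N : ℝ) / Real.pi) * Real.arctan (Real.sqrt ((N : ℝ) - 1))⌋ ≠ 0}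
        22 := by
  refine ⟨floor_all, floor_22, ⟨⟨by norm_num, ?_⟩, ?_⟩⟩
  · have h : ((22:ℤ) : ℝ) = (22:ℝ) := by norm_cast
    rw [h, floor_22]
    norm_num
  · intro N hN
    obtain ⟨h2, hne⟩ := hN
    by_contra h
    push_neg at h
    have h21 : N ≤ 21 := by omega
    exact hne (by rw [floor_all N h2 h21]; ring)
end

section
/- Let N and m be integers with N ≥ 3 and 0 ≤ m ≤ N − 2. The function φ ↦ sin(2φ − (2φ + m·π)/N) / (4·cos²(φ)·sin((2φ + m·π)/N)) is strictly monotonically increasing on the open interval (m·π/(2·(N − 1)), π/2). -/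
open Real Set

lemma abs_sin_nat_mul_le_aux (n : ℕ) (x : ℝ) :
    |Real.sin ((n : ℝ) * x)| ≤ (n : ℝ) * |Real.sin x| := by
  induction n with
  | zero => simp
  | succ k ih =>
    have h1 : ((k + 1 : ℕ) : ℝ) * x = (k : ℝ) * x + x := by push_cast; ring
    rw [h1, Real.sin_add]
    have h2 : |Real.sin ((k : ℝ) * x) * Real.cos x + Real.cos ((k : ℝ) * x) * Real.sin x|
        ≤ |Real.sin ((k : ℝ) * x)| + |Real.sin x| := by
      calc |Real.sin ((k : ℝ) * x) * Real.cos x + Real.cos ((k : ℝ) * x) * Real.sin x|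
          ≤ |Real.sin ((k : ℝ) * x) * Real.cos x| + |Real.cos ((k : ℝ) * x) * Real.sin x| :=
            abs_add_le _ _
        _ ≤ |Real.sin ((k : ℝ) * x)| + |Real.sin x| := by
            rw [abs_mul, abs_mul]
            have hc1 := Real.abs_cos_le_one x
            have hc2 := Real.abs_cos_le_one ((k : ℝ) * x)
            have hs1 := abs_nonneg (Real.sin ((k : ℝ) * x))
            have hs2 := abs_nonneg (Real.sin x)
            nlinarith
    have h3 : ((k + 1 : ℕ) : ℝ) * |Real.sin x| = (k : ℝ) * |Real.sin x| + |Real.sin x| := by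
      push_cast; ring
    rw [h3]
    linarith

theorem stmt_13 (N m : ℤ) (hN : 3 ≤ N) (hm0 : 0 ≤ m) (hm : m ≤ N - 2) :
    StrictMonoOn
      (fun φ : ℝ =>
        Real.sin (2 * φ - (2 * φ + (m : ℝ) * Real.pi) / (N : ℝ))
          / (4 * Real.cos φ ^ 2 * Real.sin ((2 * φ + (m : ℝ) * Real.pi) / (N : ℝ))))
      (Set.Ioo ((m : ℝ) * Real.pi / (2 * ((N : ℝ) - 1))) (Real.pi / 2)) := by
  have hNR : (3 : ℝ) ≤ (N : ℝ) := by exact_mod_cast hN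
  have hmR : (0 : ℝ) ≤ (m : ℝ) := by exact_mod_cast hm0
  have hmN : (m : ℝ) ≤ (N : ℝ) - 2 := by
    have : (m : ℝ) ≤ ((N - 2 : ℤ) : ℝ) := by exact_mod_cast hm
    push_cast at this; linarith
  have hNpos : (0 : ℝ) < (N : ℝ) := by linarith
  have hNne : (N : ℝ) ≠ 0 := ne_of_gt hNpos
  have hπ := Real.pi_pos
  have hlo0 : 0 ≤ (m : ℝ) * Real.pi / (2 * ((N : ℝ) - 1)) := by
    apply div_nonneg (mul_nonneg hmR hπ.le); linarith
  -- the key derivative fact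
  have hder : ∀ x ∈ Set.Ioo ((m : ℝ) * Real.pi / (2 * ((N : ℝ) - 1))) (Real.pi / 2),
      ∃ d, HasDerivAt (fun φ : ℝ =>
        Real.sin (2 * φ - (2 * φ + (m : ℝ) * Real.pi) / (N : ℝ))
          / (4 * Real.cos φ ^ 2 * Real.sin ((2 * φ + (m : ℝ) * Real.pi) / (N : ℝ)))) d x
        ∧ 0 < d := by
    intro x hx
    obtain ⟨hx1, hx2⟩ := hx
    have hxpos : 0 < x := lt_of_le_of_lt hlo0 hx1
    have h2N : (0 : ℝ) < 2 * ((N : ℝ) - 1) := by linarith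
    have hmlt : (m : ℝ) * Real.pi < x * (2 * ((N : ℝ) - 1)) := (div_lt_iff₀ h2N).mp hx1
    set t : ℝ := (2 * x + (m : ℝ) * Real.pi) / (N : ℝ) with ht
    have htpos : 0 < t := by
      apply div_pos _ hNpos
      nlinarith
    have htlt2x : t < 2 * x := by
      rw [ht, div_lt_iff₀ hNpos]; nlinarith
    have htltπ : t < Real.pi := by
      rw [ht, div_lt_iff₀ hNpos]; nlinarith
    have hsint : 0 < Real.sin t := Real.sin_pos_of_pos_of_lt_pi htpos htltπ
    have hcosx : 0 < Real.cos x := Real.cos_pos_of_mem_Ioo ⟨by linarith, hx2⟩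
    have hsinx : 0 < Real.sin x := Real.sin_pos_of_pos_of_lt_pi hxpos (by linarith)
    -- cos x < cos (t - x)
    have habs : |t - x| < x := by rw [abs_lt]; constructor <;> linarith
    have hcoslt : Real.cos x < Real.cos (t - x) := by
      rw [← Real.cos_abs (t - x)]
      exact Real.strictAntiOn_cos ⟨abs_nonneg _, by linarith⟩ ⟨hxpos.le, by linarith⟩ habs
    -- sin (2x) ≤ N sin t
    have hsin2x : Real.sin (2 * x) ≤ (N : ℝ) * Real.sin t := by
      have hNt : (N : ℝ) * t = 2 * x + (m : ℝ) * Real.pi := by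
        rw [ht]; field_simp
      have h1 : Real.sin ((N : ℝ) * t) = (-1) ^ m * Real.sin (2 * x) := by
        rw [hNt, Real.sin_add_int_mul_pi]
      have h2 : |Real.sin ((N : ℝ) * t)| = |Real.sin (2 * x)| := by
        have hpow : |((-1 : ℝ)) ^ m| = 1 := by
          rcases Int.even_or_odd m with he | ho
          · rw [he.neg_one_zpow]; exact abs_one
          · rw [ho.neg_one_zpow]; simp
        rw [h1, abs_mul, hpow, one_mul]
      have hNnat : ((N.toNat : ℕ) : ℝ) = (N : ℝ) := by
        exact_mod_cast Int.toNat_of_nonneg (by linarith : (0:ℤ) ≤ N)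
      have h3 := abs_sin_nat_mul_le_aux N.toNat t
      rw [hNnat, abs_of_pos hsint] at h3
      have h4 : Real.sin (2 * x) = |Real.sin (2 * x)| :=
        (abs_of_pos (Real.sin_pos_of_pos_of_lt_pi (by linarith) (by linarith))).symm
      rw [h4, ← h2]
      exact h3
    -- the key inequality
    have hkey : Real.sin (2 * x) * Real.cos x < (N : ℝ) * Real.sin t * Real.cos (t - x) := by
      have hNs : 0 < (N : ℝ) * Real.sin t := mul_pos hNpos hsint
      calc Real.sin (2 * x) * Real.cos x ≤ ((N : ℝ) * Real.sin t) * Real.cos x :=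
            mul_le_mul_of_nonneg_right hsin2x hcosx.le
        _ < ((N : ℝ) * Real.sin t) * Real.cos (t - x) :=
            (mul_lt_mul_iff_right₀ hNs).mpr hcoslt
    -- build the derivative
    have hA : HasDerivAt (fun φ : ℝ => 2 * φ + (m : ℝ) * Real.pi) 2 x := by
      simpa using ((hasDerivAt_id x).const_mul (2 : ℝ)).add_const ((m : ℝ) * Real.pi)
    have hθd : HasDerivAt (fun φ : ℝ => (2 * φ + (m : ℝ) * Real.pi) / (N : ℝ)) (2 / (N : ℝ)) x :=
      hA.div_const _
    have hud : HasDerivAt (fun φ : ℝ => 2 * φ - (2 * φ + (m : ℝ) * Real.pi) / (N : ℝ))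
        (2 - 2 / (N : ℝ)) x := by
      have h : HasDerivAt (fun φ : ℝ => 2 * φ - (2 * φ + (m : ℝ) * Real.pi) / (N : ℝ))
          (2 * 1 - 2 / (N : ℝ)) x := ((hasDerivAt_id' x).const_mul (2 : ℝ)).sub hθd
      rwa [mul_one] at h
    have hnum : HasDerivAt (fun φ : ℝ => Real.sin (2 * φ - (2 * φ + (m : ℝ) * Real.pi) / (N : ℝ)))
        (Real.cos (2 * x - t) * (2 - 2 / (N : ℝ))) x := hud.sin
    have hc2 : HasDerivAt (fun φ : ℝ => 4 * Real.cos φ ^ 2)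
        (4 * ((2 : ℕ) * Real.cos x ^ (2 - 1) * (-Real.sin x))) x :=
      ((Real.hasDerivAt_cos x).pow 2).const_mul 4
    have hsθ : HasDerivAt (fun φ : ℝ => Real.sin ((2 * φ + (m : ℝ) * Real.pi) / (N : ℝ)))
        (Real.cos t * (2 / (N : ℝ))) x := hθd.sin
    have hden : HasDerivAt (fun φ : ℝ => 4 * Real.cos φ ^ 2 *
        Real.sin ((2 * φ + (m : ℝ) * Real.pi) / (N : ℝ)))
        (4 * ((2 : ℕ) * Real.cos x ^ (2 - 1) * (-Real.sin x)) * Real.sin t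
          + 4 * Real.cos x ^ 2 * (Real.cos t * (2 / (N : ℝ)))) x := hc2.mul hsθ
    have hdenx : 0 < 4 * Real.cos x ^ 2 * Real.sin t := by positivity
    have hfd := hnum.div hden (ne_of_gt hdenx)
    refine ⟨_, hfd, ?_⟩
    apply div_pos _ (pow_pos hdenx 2)
    -- numerator positivity
    have hp1 : Real.sin x ^ 2 + Real.cos x ^ 2 = 1 := Real.sin_sq_add_cos_sq x
    have hp2 : Real.sin t ^ 2 + Real.cos t ^ 2 = 1 := Real.sin_sq_add_cos_sq t
    have hEq : Real.cos (2 * x - t) * (2 - 2 / (N : ℝ)) * (4 * Real.cos x ^ 2 * Real.sin t)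
        - Real.sin (2 * x - t) * (4 * ((2 : ℕ) * Real.cos x ^ (2 - 1) * (-Real.sin x)) * Real.sin t
          + 4 * Real.cos x ^ 2 * (Real.cos t * (2 / (N : ℝ))))
        = 4 * Real.cos x * (2 * Real.sin t * Real.cos (t - x)
            - 2 / (N : ℝ) * Real.cos x * Real.sin (2 * x)) := by
      rw [Real.cos_sub, Real.sin_sub, Real.cos_sub t x, Real.sin_two_mul, Real.cos_two_mul]
      push_cast
      linear_combination (16 * Real.sin t * Real.cos t * Real.cos x ^ 2) * hp1
        - (8 * (2 / (N : ℝ)) * Real.sin x * Real.cos x ^ 3) * hp2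
    rw [hEq]
    have hinner : 0 < 2 * Real.sin t * Real.cos (t - x)
        - 2 / (N : ℝ) * Real.cos x * Real.sin (2 * x) := by
      have hsplit : 2 * Real.sin t * Real.cos (t - x)
          - 2 / (N : ℝ) * Real.cos x * Real.sin (2 * x)
          = 2 / (N : ℝ) * ((N : ℝ) * Real.sin t * Real.cos (t - x)
            - Real.sin (2 * x) * Real.cos x) := by
        field_simp
      rw [hsplit]
      apply mul_pos (by positivity)
      linarith
    positivity
  apply strictMonoOn_of_deriv_pos (convex_Ioo _ _)
  · intro x hx
    exact ((hder x hx).choose_spec.1.differentiableAt).continuousAt.continuousWithinAt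
  · intro x hx
    rw [interior_Ioo] at hx
    obtain ⟨d, hd, hdpos⟩ := hder x hx
    rw [hd.deriv]
    exact hdpos
end

section
/- Let N and m be integers with N ≥ 3 and 0 ≤ m ≤ N − 2, and for φ in (m·π/(2·(N − 1)), π/2) set x_m(φ) = (1/(2·cos φ))·√( sin(2φ − (2φ + m·π)/N) / sin((2φ + m·π)/N) ) and κ_m(φ) = arctan(2·x_m(φ) − tan φ) + arctan(2·x_m(φ) + tan φ). Then κ_m is strictly monotonically increasing on (m·π/(2·(N − 1)), π/2). -/
set_option maxHeartbeats 1000000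
open Real Set


lemma concave_helper {x lam : ℝ} (hx0 : 0 < x) (hxpi : x ≤ π) (h0 : 0 < lam) (h1 : lam < 1) :
    lam * Real.sin x < Real.sin (lam * x) := by
  have h := strictConcaveOn_sin_Icc.2 (Set.mem_Icc.mpr ⟨hx0.le, hxpi⟩)
    (Set.mem_Icc.mpr ⟨le_rfl, Real.pi_pos.le⟩ : (0:ℝ) ∈ Icc 0 π) hx0.ne'
    h0 (by linarith : (0:ℝ) < 1 - lam) (by ring)
  simpa using h

lemma sin_lt_mul_sin {K A θ : ℝ} (hK : 2 ≤ K) (hA : 0 < A) (hθ : 0 < θ)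
    (hsum : A + θ < π) (hAK : A ≤ K * θ) : Real.sin A < K * Real.sin θ := by
  have hπ := Real.pi_pos
  have hθπ : θ < π := by linarith
  have hsθ : 0 < Real.sin θ := Real.sin_pos_of_pos_of_lt_pi hθ hθπ
  by_cases hcase : A ≤ θ
  · have hsub := Real.sin_sub_sin θ A
    have h1 : 0 ≤ Real.sin ((θ - A) / 2) :=
      Real.sin_nonneg_of_nonneg_of_le_pi (by linarith) (by linarith)
    have h2 : 0 < Real.cos ((θ + A) / 2) :=
      Real.cos_pos_of_mem_Ioo ⟨by linarith, by linarith⟩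
    nlinarith
  · push_neg at hcase
    have hθ2 : θ < π / 2 := by linarith
    have hK0 : 0 < K := by linarith
    by_cases hsmall : K * θ < π / 2
    · have hmono : Real.sin A ≤ Real.sin (K * θ) := by
        have hsub := Real.sin_sub_sin (K * θ) A
        have h1 : 0 ≤ Real.sin ((K * θ - A) / 2) :=
          Real.sin_nonneg_of_nonneg_of_le_pi (by linarith) (by linarith)
        have h2 : 0 < Real.cos ((K * θ + A) / 2) :=
          Real.cos_pos_of_mem_Ioo ⟨by linarith, by linarith⟩
        nlinarith
      have hconc : (1 / K) * Real.sin (K * θ) < Real.sin ((1 / K) * (K * θ)) := by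
        refine concave_helper (by positivity) (by linarith) (by positivity) ?_
        rw [div_lt_one hK0]; linarith
      rw [show (1 / K) * (K * θ) = θ by field_simp] at hconc
      have hfin : Real.sin (K * θ) < K * Real.sin θ := by
        calc Real.sin (K * θ) = K * ((1 / K) * Real.sin (K * θ)) := by field_simp
          _ < K * Real.sin θ := mul_lt_mul_of_pos_left hconc hK0
      linarith
    · push_neg at hsmall
      have h1 : Real.sin A ≤ 1 := Real.sin_le_one A
      have h2 : (2 * θ / π) * Real.sin (π / 2) < Real.sin ((2 * θ / π) * (π / 2)) := by
        refine concave_helper (by positivity) (by linarith) (by positivity) ?_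
        rw [div_lt_one hπ]; linarith
      rw [Real.sin_pi_div_two, mul_one,
        show (2 * θ / π) * (π / 2) = θ by field_simp] at h2
      have h3 : 1 ≤ K * (2 * θ / π) := by
        rw [show K * (2 * θ / π) = (2 * (K * θ)) / π by ring, le_div_iff₀ hπ]; linarith
      nlinarith [mul_lt_mul_of_pos_left h2 hK0]


lemma kappa_mem (φ θ : ℝ) (hφ0 : 0 < φ) (hφ : φ < π / 2) (hθ : 0 < θ) (hA : 0 < 2 * φ - θ) :
    Real.arctan (2 * ((1 / (2 * Real.cos φ)) *
        Real.sqrt (Real.sin (2 * φ - θ) / Real.sin θ)) - Real.tan φ)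
      + Real.arctan (2 * ((1 / (2 * Real.cos φ)) *
        Real.sqrt (Real.sin (2 * φ - θ) / Real.sin θ)) + Real.tan φ) ∈ Ioo 0 π := by
  have hπ := Real.pi_pos
  have hc1 : 0 < Real.cos φ := Real.cos_pos_of_mem_Ioo ⟨by linarith, hφ⟩
  have hsθ : 0 < Real.sin θ := Real.sin_pos_of_pos_of_lt_pi hθ (by linarith)
  have hsA : 0 < Real.sin (2 * φ - θ) := Real.sin_pos_of_pos_of_lt_pi hA (by linarith)
  have hSpos : 0 < Real.sin (2 * φ - θ) / Real.sin θ := div_pos hsA hsθ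
  have hrpos : 0 < Real.sqrt (Real.sin (2 * φ - θ) / Real.sin θ) := Real.sqrt_pos.2 hSpos
  set r := Real.sqrt (Real.sin (2 * φ - θ) / Real.sin θ)
  set t := Real.tan φ
  constructor
  · have h1 : Real.arctan (-(2 * ((1 / (2 * Real.cos φ)) * r) - t))
        < Real.arctan (2 * ((1 / (2 * Real.cos φ)) * r) + t) := by
      apply Real.arctan_strictMono
      have : 0 < 2 * ((1 / (2 * Real.cos φ)) * r) := by positivity
      linarith
    rw [Real.arctan_neg] at h1
    linarith
  · have h1 := Real.arctan_lt_pi_div_two (2 * ((1 / (2 * Real.cos φ)) * r) - t)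
    have h2 := Real.arctan_lt_pi_div_two (2 * ((1 / (2 * Real.cos φ)) * r) + t)
    linarith

lemma g_strictAnti (n mr lo : ℝ) (hn : 3 ≤ n) (hmr : 0 ≤ mr) (hlo : 0 ≤ lo)
    (hkey : ∀ φ ∈ Ioo lo (π/2), 0 < 2 * φ - (2 * φ + mr * π) / n) :
    StrictAntiOn (fun φ => Real.sin ((mr * π - (n - 2) * φ) / n) / Real.sin φ)
      (Ioo lo (π/2)) := by
  have hπ := Real.pi_pos
  have hn0 : (0:ℝ) < n := by linarith
  apply strictAntiOn_of_deriv_neg (convex_Ioo _ _)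
  · apply ContinuousOn.div
    · exact (Real.continuous_sin.comp (by continuity)).continuousOn
    · exact Real.continuous_sin.continuousOn
    · intro x hx
      exact (Real.sin_pos_of_pos_of_lt_pi (lt_of_le_of_lt hlo hx.1) (by linarith [hx.2])).ne'
  · intro φ hφ
    rw [interior_Ioo] at hφ
    have hφ0 : 0 < φ := lt_of_le_of_lt hlo hφ.1
    have hφ2 : φ < π / 2 := hφ.2
    have hs1 : 0 < Real.sin φ := Real.sin_pos_of_pos_of_lt_pi hφ0 (by linarith)
    set ψ := (mr * π - (n - 2) * φ) / n with hψd
    have hd1 : HasDerivAt (fun x : ℝ => (mr * π - (n - 2) * x) / n) ((0 - (n-2)*1) / n) φ := by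
      exact (((hasDerivAt_const φ (mr * π)).sub ((hasDerivAt_id φ).const_mul (n - 2)))).div_const n
    have hd2 : HasDerivAt (fun x : ℝ => Real.sin ((mr * π - (n - 2) * x) / n))
        (Real.cos ψ * ((0 - (n-2)*1) / n)) φ := by
      have := (Real.hasDerivAt_sin ψ).comp φ hd1; exact this
    have hd3 : HasDerivAt (fun x : ℝ => Real.sin ((mr * π - (n - 2) * x) / n) / Real.sin x)
        ((Real.cos ψ * ((0 - (n-2)*1) / n) * Real.sin φ
          - Real.sin ψ * Real.cos φ) / (Real.sin φ) ^ 2) φ :=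
      hd2.div (Real.hasDerivAt_sin φ) hs1.ne'
    rw [hd3.deriv]
    apply div_neg_of_neg_of_pos _ (by positivity)
    -- numerator negative
    have hA : 0 < φ - ψ := by
      have := hkey φ hφ
      have : 0 < (2 * (n-1) * φ - mr * π) / n := by
        rw [show (2 * (n-1) * φ - mr * π) / n = 2 * φ - (2 * φ + mr * π) / n by field_simp; ring]
        exact this
      rw [hψd]
      rw [show φ - (mr * π - (n - 2) * φ) / n = (2 * (n-1) * φ - mr * π) / n by field_simp; ring]
      exact this
    have hθpos : 0 < φ + ψ := by
      rw [hψd, show φ + (mr * π - (n - 2) * φ) / n = (2 * φ + mr * π) / n by field_simp; ring]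
      positivity
    have hsin := sin_lt_mul_sin (K := n - 1) (A := φ - ψ) (θ := φ + ψ)
      (by linarith) hA hθpos (by linarith) ?_
    · have hexp : (n-1) * Real.sin (φ + ψ) - Real.sin (φ - ψ)
          = (n-2) * (Real.sin φ * Real.cos ψ) + n * (Real.cos φ * Real.sin ψ) := by
        rw [Real.sin_add, Real.sin_sub]; ring
      have hnum : Real.cos ψ * ((0 - (n-2)*1) / n) * Real.sin φ - Real.sin ψ * Real.cos φ
          = -(((n-1) * Real.sin (φ + ψ) - Real.sin (φ - ψ)) / n) := by
        rw [hexp]; field_simp; ring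
      rw [hnum]
      have hq : 0 < (n-1) * Real.sin (φ + ψ) - Real.sin (φ - ψ) := by linarith
      have := div_pos hq hn0
      linarith
    · have hdiff : (n-1) * (φ + ψ) - (φ - ψ) = mr * π := by
        rw [hψd]; field_simp; ring
      nlinarith [mul_nonneg hmr hπ.le]


lemma cos_kappa (φ θ : ℝ) (hφ0 : 0 < φ) (hφ : φ < π / 2) (hθ : 0 < θ) (hA : 0 < 2 * φ - θ) :
    Real.cos (Real.arctan (2 * ((1 / (2 * Real.cos φ)) *
        Real.sqrt (Real.sin (2 * φ - θ) / Real.sin θ)) - Real.tan φ)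
      + Real.arctan (2 * ((1 / (2 * Real.cos φ)) *
        Real.sqrt (Real.sin (2 * φ - θ) / Real.sin θ)) + Real.tan φ))
    = Real.sin (θ - φ) / Real.sin φ := by
  have hπ := Real.pi_pos
  have hs1 : 0 < Real.sin φ := Real.sin_pos_of_pos_of_lt_pi hφ0 (by linarith)
  have hc1 : 0 < Real.cos φ := Real.cos_pos_of_mem_Ioo ⟨by linarith, hφ⟩
  have hsθ : 0 < Real.sin θ := Real.sin_pos_of_pos_of_lt_pi hθ (by linarith)
  have hsA : 0 < Real.sin (2 * φ - θ) := Real.sin_pos_of_pos_of_lt_pi hA (by linarith)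
  set s1 := Real.sin φ with hs1d
  set c1 := Real.cos φ with hc1d
  set s2 := Real.sin (θ - φ) with hs2d
  set c2 := Real.cos (θ - φ) with hc2d
  set X := Real.sin θ with hXd
  have hθeq : X = s1 * c2 + c1 * s2 := by
    rw [hXd, show θ = φ + (θ - φ) by ring, Real.sin_add]
  have hAeq : Real.sin (2 * φ - θ) = s1 * c2 - c1 * s2 := by
    rw [show 2 * φ - θ = φ - (θ - φ) by ring, Real.sin_sub]
  have hp1 : s1 ^ 2 + c1 ^ 2 = 1 := Real.sin_sq_add_cos_sq φ
  have hp2 : s2 ^ 2 + c2 ^ 2 = 1 := Real.sin_sq_add_cos_sq (θ - φ)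
  set S := Real.sin (2 * φ - θ) / X with hSd
  have hSpos : 0 < S := div_pos hsA hsθ
  set r := Real.sqrt S with hrd
  have hr2 : r ^ 2 = S := Real.sq_sqrt hSpos.le
  have hrS : r ^ 2 * (s1 * c2 + c1 * s2) = s1 * c2 - c1 * s2 := by
    rw [hr2, hSd, hAeq, ← hθeq]; field_simp
  have hrpos : 0 < r := Real.sqrt_pos.2 hSpos
  have htan : Real.tan φ = s1 / c1 := Real.tan_eq_sin_div_cos φ
  set a := 2 * ((1 / (2 * c1)) * r) - Real.tan φ with had
  set b := 2 * ((1 / (2 * c1)) * r) + Real.tan φ with hbd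
  have ha : a = (r - s1) / c1 := by rw [had, htan]; field_simp
  have hb : b = (r + s1) / c1 := by rw [hbd, htan]; field_simp
  rw [Real.cos_add, Real.cos_arctan, Real.cos_arctan, Real.sin_arctan, Real.sin_arctan]
  have hQa : (0:ℝ) < 1 + a ^ 2 := by positivity
  have hQb : (0:ℝ) < 1 + b ^ 2 := by positivity
  have hsa : Real.sqrt (1 + a ^ 2) ≠ 0 := by positivity
  have hsb : Real.sqrt (1 + b ^ 2) ≠ 0 := by positivity
  have hstep : 1 / Real.sqrt (1 + a ^ 2) * (1 / Real.sqrt (1 + b ^ 2))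
      - a / Real.sqrt (1 + a ^ 2) * (b / Real.sqrt (1 + b ^ 2))
      = (1 - a * b) / (Real.sqrt (1 + a ^ 2) * Real.sqrt (1 + b ^ 2)) := by
    field_simp
  rw [hstep]
  have hPQ : Real.sqrt (1 + a ^ 2) * Real.sqrt (1 + b ^ 2) = 2 * s1 / (c1 * X) := by
    rw [← Real.sqrt_mul hQa.le]
    rw [show (1 + a ^ 2) * (1 + b ^ 2) = (2 * s1 / (c1 * X)) ^ 2 from ?_]
    · exact Real.sqrt_sq (by positivity)
    · rw [ha, hb, hθeq]
      have hu : s1 * c2 + c1 * s2 ≠ 0 := by rw [← hθeq]; exact hsθ.ne'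
      field_simp
      linear_combination ((s1*c2+c1*s2)^2*(c1^2+s1^2+2*r^2+1) - 4*s1^2*c2^2) * hp1 + ((1+r^2)*(s1*c2+c1*s2) + 2*s1*c2 - 4*s1^2*(s1*c2+c1*s2)) * hrS + (4*s1^2*c1^2) * hp2
  rw [hPQ, ha, hb, div_eq_div_iff (by positivity) (ne_of_gt hs1)]
  rw [hθeq]
  have hu : s1 * c2 + c1 * s2 ≠ 0 := by rw [← hθeq]; exact hsθ.ne'
  field_simp
  linear_combination (-1) * hrS + (s1*c2+c1*s2) * hp1

theorem stmt_14 (N m : ℤ) (hN : 3 ≤ N) (hm0 : 0 ≤ m) (hm : m ≤ N - 2) :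
    StrictMonoOn
      (fun φ : ℝ =>
        Real.arctan (2 * ((1 / (2 * Real.cos φ)) *
            Real.sqrt (Real.sin (2 * φ - (2 * φ + (m : ℝ) * Real.pi) / (N : ℝ))
              / Real.sin ((2 * φ + (m : ℝ) * Real.pi) / (N : ℝ)))) - Real.tan φ)
          + Real.arctan (2 * ((1 / (2 * Real.cos φ)) *
              Real.sqrt (Real.sin (2 * φ - (2 * φ + (m : ℝ) * Real.pi) / (N : ℝ))
                / Real.sin ((2 * φ + (m : ℝ) * Real.pi) / (N : ℝ)))) + Real.tan φ))
      (Set.Ioo ((m : ℝ) * Real.pi / (2 * ((N : ℝ) - 1))) (Real.pi / 2)) := by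
  have hπ := Real.pi_pos
  have hN' : (3:ℝ) ≤ (N:ℝ) := by exact_mod_cast hN
  have hm0' : (0:ℝ) ≤ (m:ℝ) := by exact_mod_cast hm0
  set n : ℝ := (N:ℝ) with hn
  set mr : ℝ := (m:ℝ) with hmr
  have hn0 : (0:ℝ) < n := by linarith
  set lo : ℝ := mr * π / (2 * (n - 1)) with hlod
  have hlo0 : 0 ≤ lo := div_nonneg (by positivity) (by linarith)
  have hkey : ∀ φ ∈ Set.Ioo lo (π/2), 0 < 2 * φ - (2 * φ + mr * π) / n := by
    intro φ hφ
    have hφlo : lo < φ := hφ.1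
    have h2 : mr * π < φ * (2 * (n - 1)) :=
      (div_lt_iff₀ (by linarith : (0:ℝ) < 2 * (n - 1))).1 hφlo
    rw [show 2 * φ - (2 * φ + mr * π) / n = (2 * (n-1) * φ - mr * π) / n by
      field_simp; ring]
    exact div_pos (by linarith) hn0
  have hanti := g_strictAnti n mr lo hN' hm0' hlo0 hkey
  intro φ1 hφ1 φ2 hφ2 h12
  have hφ10 : 0 < φ1 := lt_of_le_of_lt hlo0 hφ1.1
  have hφ20 : 0 < φ2 := lt_of_le_of_lt hlo0 hφ2.1
  have hθ1 : 0 < (2 * φ1 + mr * π) / n :=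
    div_pos (by nlinarith [mul_nonneg hm0' hπ.le]) hn0
  have hθ2 : 0 < (2 * φ2 + mr * π) / n :=
    div_pos (by nlinarith [mul_nonneg hm0' hπ.le]) hn0
  have mem1 := kappa_mem φ1 ((2 * φ1 + mr * π) / n) hφ10 hφ1.2 hθ1 (hkey φ1 hφ1)
  have mem2 := kappa_mem φ2 ((2 * φ2 + mr * π) / n) hφ20 hφ2.2 hθ2 (hkey φ2 hφ2)
  have e1 := cos_kappa φ1 ((2 * φ1 + mr * π) / n) hφ10 hφ1.2 hθ1 (hkey φ1 hφ1)
  have e2 := cos_kappa φ2 ((2 * φ2 + mr * π) / n) hφ20 hφ2.2 hθ2 (hkey φ2 hφ2)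
  rw [show (2 * φ1 + mr * π) / n - φ1 = (mr * π - (n - 2) * φ1) / n by field_simp; ring] at e1
  rw [show (2 * φ2 + mr * π) / n - φ2 = (mr * π - (n - 2) * φ2) / n by field_simp; ring] at e2
  have hg : Real.sin ((mr * π - (n - 2) * φ2) / n) / Real.sin φ2
      < Real.sin ((mr * π - (n - 2) * φ1) / n) / Real.sin φ1 := hanti hφ1 hφ2 h12
  exact (Real.strictAntiOn_cos.lt_iff_gt (Set.mem_Icc_of_Ioo mem2)
    (Set.mem_Icc_of_Ioo mem1)).1 (by rw [e1, e2]; exact hg)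
end

section
/- Let N and m be integers with N ≥ 3 and 0 ≤ m ≤ N − 2, and for φ in (m·π/(2·(N − 1)), π/2) set x_m(φ) = (1/(2·cos φ))·√( sin(2φ − (2φ + m·π)/N) / sin((2φ + m·π)/N) ). Then 2·x_m(φ) − tan(φ) tends to cot((m + 1)·π/N) as φ tends to π/2 from the left. -/
open Filter Topology

set_option maxHeartbeats 1000000 in
theorem stmt_16 (N m : ℤ) (hN : 3 ≤ N) (hm0 : 0 ≤ m) (hm : m ≤ N - 2) :
    Tendsto
      (fun φ : ℝ =>
        2 * ((1 / (2 * Real.cos φ)) *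
            Real.sqrt (Real.sin (2 * φ - (2 * φ + (m : ℝ) * Real.pi) / (N : ℝ))
              / Real.sin ((2 * φ + (m : ℝ) * Real.pi) / (N : ℝ)))) - Real.tan φ)
      (𝓝[Set.Ioo ((m : ℝ) * Real.pi / (2 * ((N : ℝ) - 1))) (Real.pi / 2)] (Real.pi / 2))
      (𝓝 (Real.cot (((m : ℝ) + 1) * Real.pi / (N : ℝ)))) := by
  have hpi := Real.pi_pos
  have hNR : (3:ℝ) ≤ (N:ℝ) := by exact_mod_cast hN
  have hN0 : (0:ℝ) < (N:ℝ) := by linarith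
  have hmR : (m:ℝ) ≤ (N:ℝ) - 2 := by exact_mod_cast hm
  have hm0R : (0:ℝ) ≤ (m:ℝ) := by exact_mod_cast hm0
  set θ₀ : ℝ := ((m:ℝ)+1)*Real.pi/(N:ℝ) with hθ₀def
  have hθ₀pos : 0 < θ₀ := by
    apply div_pos _ hN0; nlinarith
  have hθ₀lt : θ₀ < Real.pi := by
    rw [div_lt_iff₀ hN0]; nlinarith
  have hsθ₀ : 0 < Real.sin θ₀ := Real.sin_pos_of_pos_of_lt_pi hθ₀pos hθ₀lt
  set s : Set ℝ := Set.Ioo ((m : ℝ) * Real.pi / (2 * ((N : ℝ) - 1))) (Real.pi / 2) with hsdef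
  set l := 𝓝[s] (Real.pi/2) with hldef
  have hle : l ≤ 𝓝 (Real.pi/2) := nhdsWithin_le_nhds
  -- θ function
  have hθcont : Continuous (fun φ : ℝ => (2*φ + (m:ℝ)*Real.pi)/(N:ℝ)) := by
    fun_prop
  have h1 : Tendsto (fun φ : ℝ => (2*φ + (m:ℝ)*Real.pi)/(N:ℝ)) l (𝓝 θ₀) := by
    refine (hθcont.tendsto' (Real.pi/2) θ₀ ?_).mono_left hle
    rw [hθ₀def]; ring
  have hsinθ : Tendsto (fun φ : ℝ => Real.sin ((2*φ + (m:ℝ)*Real.pi)/(N:ℝ))) l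
      (𝓝 (Real.sin θ₀)) := (Real.continuous_sin.tendsto _).comp h1
  have hcosθ : Tendsto (fun φ : ℝ => Real.cos ((2*φ + (m:ℝ)*Real.pi)/(N:ℝ))) l
      (𝓝 (Real.cos θ₀)) := (Real.continuous_cos.tendsto _).comp h1
  have hsinφ : Tendsto (fun φ : ℝ => Real.sin φ) l (𝓝 1) := by
    refine (Real.continuous_sin.tendsto' (Real.pi/2) 1 Real.sin_pi_div_two).mono_left hle
  have hcosφ : Tendsto (fun φ : ℝ => Real.cos φ) l (𝓝 0) := by
    refine (Real.continuous_cos.tendsto' (Real.pi/2) 0 Real.cos_pi_div_two).mono_left hle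
  have hnum : Tendsto (fun φ : ℝ => Real.sin (2*φ - (2*φ + (m:ℝ)*Real.pi)/(N:ℝ))) l
      (𝓝 (Real.sin θ₀)) := by
    have hc : Continuous (fun φ : ℝ => Real.sin (2*φ - (2*φ + (m:ℝ)*Real.pi)/(N:ℝ))) := by
      fun_prop
    refine (hc.tendsto' (Real.pi/2) (Real.sin θ₀) ?_).mono_left hle
    have : 2*(Real.pi/2) - (2*(Real.pi/2) + (m:ℝ)*Real.pi)/(N:ℝ) = Real.pi - θ₀ := by
      rw [hθ₀def]; ring
    rw [this, Real.sin_pi_sub]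
  have hratio : Tendsto (fun φ : ℝ =>
      Real.sin (2*φ - (2*φ + (m:ℝ)*Real.pi)/(N:ℝ)) /
        Real.sin ((2*φ + (m:ℝ)*Real.pi)/(N:ℝ))) l (𝓝 1) := by
    have := hnum.div hsinθ hsθ₀.ne'
    rwa [div_self hsθ₀.ne'] at this
  have hsqrt : Tendsto (fun φ : ℝ =>
      Real.sqrt (Real.sin (2*φ - (2*φ + (m:ℝ)*Real.pi)/(N:ℝ)) /
        Real.sin ((2*φ + (m:ℝ)*Real.pi)/(N:ℝ)))) l (𝓝 1) := by
    have := (Real.continuous_sqrt.tendsto' 1 1 Real.sqrt_one).comp hratio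
    exact this
  -- the simplified function g
  have hg : Tendsto (fun φ : ℝ =>
      (2 * Real.sin φ * (Real.cos ((2*φ + (m:ℝ)*Real.pi)/(N:ℝ)) /
          Real.sin ((2*φ + (m:ℝ)*Real.pi)/(N:ℝ))) - Real.cos φ) /
        (Real.sqrt (Real.sin (2*φ - (2*φ + (m:ℝ)*Real.pi)/(N:ℝ)) /
          Real.sin ((2*φ + (m:ℝ)*Real.pi)/(N:ℝ))) + Real.sin φ)) l
      (𝓝 (Real.cot θ₀)) := by
    have hnum' : Tendsto (fun φ : ℝ =>
        2 * Real.sin φ * (Real.cos ((2*φ + (m:ℝ)*Real.pi)/(N:ℝ)) /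
          Real.sin ((2*φ + (m:ℝ)*Real.pi)/(N:ℝ))) - Real.cos φ) l
        (𝓝 (2 * 1 * (Real.cos θ₀ / Real.sin θ₀) - 0)) :=
      (((hsinφ.const_mul 2).mul (hcosθ.div hsinθ hsθ₀.ne'))).sub hcosφ
    have hden' : Tendsto (fun φ : ℝ =>
        Real.sqrt (Real.sin (2*φ - (2*φ + (m:ℝ)*Real.pi)/(N:ℝ)) /
          Real.sin ((2*φ + (m:ℝ)*Real.pi)/(N:ℝ))) + Real.sin φ) l (𝓝 (1 + 1)) :=
      hsqrt.add hsinφ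
    have := hnum'.div hden' (by norm_num)
    have hval : (2 * 1 * (Real.cos θ₀ / Real.sin θ₀) - 0) / (1 + 1) = Real.cot θ₀ := by
      rw [Real.cot_eq_cos_div_sin]; ring
    rwa [hval] at this
  refine Tendsto.congr' ?_ hg
  filter_upwards [self_mem_nhdsWithin] with φ hφ
  obtain ⟨hφl, hφu⟩ := hφ
  have hφ0 : 0 < φ := lt_of_le_of_lt (div_nonneg (by positivity) (by linarith)) hφl
  have hc : 0 < Real.cos φ := Real.cos_pos_of_mem_Ioo ⟨by linarith, hφu⟩
  have hsφ : 0 < Real.sin φ := Real.sin_pos_of_pos_of_lt_pi hφ0 (by linarith)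
  set θ : ℝ := (2*φ + (m:ℝ)*Real.pi)/(N:ℝ) with hθdef
  have hθpos : 0 < θ := by apply div_pos _ hN0; nlinarith
  have hθlt : θ < Real.pi := by rw [hθdef, div_lt_iff₀ hN0]; nlinarith
  have hsθ : 0 < Real.sin θ := Real.sin_pos_of_pos_of_lt_pi hθpos hθlt
  have hAl : 0 < 2*φ - θ := by
    rw [div_lt_iff₀ (by linarith : (0:ℝ) < 2*((N:ℝ)-1))] at hφl
    rw [hθdef, sub_pos, div_lt_iff₀ hN0]; nlinarith
  have hAu : 2*φ - θ < Real.pi := by linarith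
  have hS : 0 < Real.sin (2*φ - θ) := Real.sin_pos_of_pos_of_lt_pi hAl hAu
  have hargpos : 0 < Real.sin (2*φ - θ) / Real.sin θ := div_pos hS hsθ
  set r : ℝ := Real.sqrt (Real.sin (2*φ - θ) / Real.sin θ) with hrdef
  have hr2 : r^2 = Real.sin (2*φ - θ) / Real.sin θ := Real.sq_sqrt hargpos.le
  have hrpos : 0 < r := Real.sqrt_pos.mpr hargpos
  have hden : r + Real.sin φ ≠ 0 := by positivity
  have key : (r^2 - (Real.sin φ)^2) * Real.sin θ
      = Real.cos φ * (2*Real.sin φ*Real.cos θ - Real.cos φ * Real.sin θ) := by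
    have hr2' : r^2 * Real.sin θ = Real.sin (2*φ - θ) := by
      rw [hr2, div_mul_cancel₀ _ hsθ.ne']
    rw [Real.sin_sub, Real.sin_two_mul, Real.cos_two_mul] at hr2'
    nlinarith [hr2', Real.sin_sq_add_cos_sq φ]
  show (2 * Real.sin φ * (Real.cos θ / Real.sin θ) - Real.cos φ) / (r + Real.sin φ)
      = 2 * ((1 / (2 * Real.cos φ)) * r) - Real.tan φ
  rw [Real.tan_eq_sin_div_cos]
  field_simp
  nlinarith [key]
end

section
/- Let N and m be integers with N ≥ 3 and 0 ≤ m ≤ N − 2, and for φ in (m·π/(2·(N − 1)), π/2) set x_m(φ) = (1/(2·cos φ))·√( sin(2φ − (2φ + m·π)/N) / sin((2φ + m·π)/N) ) and κ_m(φ) = arctan(2·x_m(φ) − tan φ) + arctan(2·x_m(φ) + tan φ). Then κ_m(φ) tends to π − (m + 1)·π/N as φ tends to π/2 from the left. -/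
open Filter Topology

theorem stmt_17 (N m : ℤ) (hN : 3 ≤ N) (hm0 : 0 ≤ m) (hm : m ≤ N - 2) :
    Tendsto
      (fun φ : ℝ =>
        Real.arctan (2 * ((1 / (2 * Real.cos φ)) *
            Real.sqrt (Real.sin (2 * φ - (2 * φ + (m : ℝ) * Real.pi) / (N : ℝ))
              / Real.sin ((2 * φ + (m : ℝ) * Real.pi) / (N : ℝ)))) - Real.tan φ)
          + Real.arctan (2 * ((1 / (2 * Real.cos φ)) *
              Real.sqrt (Real.sin (2 * φ - (2 * φ + (m : ℝ) * Real.pi) / (N : ℝ))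
                / Real.sin ((2 * φ + (m : ℝ) * Real.pi) / (N : ℝ)))) + Real.tan φ))
      (𝓝[Set.Ioo ((m : ℝ) * Real.pi / (2 * ((N : ℝ) - 1))) (Real.pi / 2)] (Real.pi / 2))
      (𝓝 (Real.pi - ((m : ℝ) + 1) * Real.pi / (N : ℝ))) := by
  have hπ := Real.pi_pos
  have hN3 : (3:ℝ) ≤ (N:ℝ) := by exact_mod_cast hN
  have hm0' : (0:ℝ) ≤ (m:ℝ) := by exact_mod_cast hm0
  have hm' : (m:ℝ) ≤ (N:ℝ) - 2 := by
    have : (m:ℝ) ≤ ((N - 2 : ℤ) : ℝ) := by exact_mod_cast hm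
    push_cast at this; linarith
  have hNpos : (0:ℝ) < (N:ℝ) := by linarith
  set s : Set ℝ := Set.Ioo ((m:ℝ) * Real.pi / (2 * ((N:ℝ) - 1))) (Real.pi / 2) with hsdef
  set a : ℝ := ((m:ℝ) + 1) * Real.pi / (N:ℝ) with ha
  have ha0 : 0 < a := div_pos (mul_pos (by linarith) hπ) hNpos
  have haπ : a < Real.pi := by
    rw [ha, div_lt_iff₀ hNpos]; nlinarith
  have hsina : 0 < Real.sin a := Real.sin_pos_of_pos_of_lt_pi ha0 haπ
  -- abbreviations
  set θ : ℝ → ℝ := fun φ => (2 * φ + (m:ℝ) * Real.pi) / (N:ℝ) with hθ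
  set r : ℝ → ℝ := fun φ => Real.sin (2 * φ - θ φ) / Real.sin (θ φ) with hr
  -- facts on s
  have hmem : ∀ φ ∈ s, 0 < φ ∧ φ < Real.pi / 2 ∧ 0 < Real.cos φ ∧ 0 < Real.sin φ ∧
      0 < Real.sin (θ φ) ∧ 0 < Real.sin (2 * φ - θ φ) := by
    intro φ hφ
    obtain ⟨h1, h2⟩ := hφ
    have hφ0 : 0 < φ := lt_of_le_of_lt
      (div_nonneg (mul_nonneg hm0' hπ.le) (by linarith)) h1
    have hcos : 0 < Real.cos φ := Real.cos_pos_of_mem_Ioo ⟨by linarith, h2⟩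
    have hsin : 0 < Real.sin φ := Real.sin_pos_of_pos_of_lt_pi hφ0 (by linarith)
    have hθ0 : 0 < θ φ := by
      rw [hθ]; exact div_pos (by nlinarith) hNpos
    have hθπ : θ φ < Real.pi := by
      rw [hθ, div_lt_iff₀ hNpos]; nlinarith
    have h2φθ0 : 0 < 2 * φ - θ φ := by
      rw [hθ, sub_pos, div_lt_iff₀ hNpos]
      rw [div_lt_iff₀ (by linarith : (0:ℝ) < 2 * ((N:ℝ) - 1))] at h1
      nlinarith
    have h2φθπ : 2 * φ - θ φ < Real.pi := by linarith
    exact ⟨hφ0, h2, hcos, hsin, Real.sin_pos_of_pos_of_lt_pi hθ0 hθπ,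
      Real.sin_pos_of_pos_of_lt_pi h2φθ0 h2φθπ⟩
  -- the two rewritten functions
  set G : ℝ → ℝ := fun φ =>
    (2 * Real.sin (φ - θ φ) / Real.sin (θ φ) + Real.cos φ) / (Real.sqrt (r φ) + Real.sin φ)
    with hG
  set H : ℝ → ℝ := fun φ => (Real.sqrt (r φ) + Real.sin φ) * (Real.cos φ)⁻¹ with hH
  have key : ∀ φ ∈ s,
      Real.arctan (2 * ((1 / (2 * Real.cos φ)) *
            Real.sqrt (Real.sin (2 * φ - (2 * φ + (m : ℝ) * Real.pi) / (N : ℝ))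
              / Real.sin ((2 * φ + (m : ℝ) * Real.pi) / (N : ℝ)))) - Real.tan φ)
          + Real.arctan (2 * ((1 / (2 * Real.cos φ)) *
              Real.sqrt (Real.sin (2 * φ - (2 * φ + (m : ℝ) * Real.pi) / (N : ℝ))
                / Real.sin ((2 * φ + (m : ℝ) * Real.pi) / (N : ℝ)))) + Real.tan φ)
        = Real.arctan (G φ) + Real.arctan (H φ) := by
    intro φ hφ
    obtain ⟨hφ0, hφ2, hcos, hsin, hsθ, hs2θ⟩ := hmem φ hφ
    have hr0 : 0 ≤ r φ := le_of_lt (div_pos hs2θ hsθ)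
    have hq2 : Real.sqrt (r φ) ^ 2 = Real.sin (2 * φ - θ φ) / Real.sin (θ φ) := by
      rw [Real.sq_sqrt hr0, hr]
    have hq0 : 0 ≤ Real.sqrt (r φ) := Real.sqrt_nonneg _
    have hqs : 0 < Real.sqrt (r φ) + Real.sin φ := by linarith
    have hA : Real.sin (2 * φ - θ φ) - Real.sin (θ φ)
        = 2 * Real.sin (φ - θ φ) * Real.cos φ := by
      rw [Real.sin_sub_sin]; ring_nf
    have hP : Real.sin φ ^ 2 + Real.cos φ ^ 2 = 1 := Real.sin_sq_add_cos_sq φ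
    have hrw : Real.sin (2 * φ - (2 * φ + (m : ℝ) * Real.pi) / (N : ℝ))
          / Real.sin ((2 * φ + (m : ℝ) * Real.pi) / (N : ℝ)) = r φ := by
      rw [hr, hθ]
    have e1 : 2 * ((1 / (2 * Real.cos φ)) * Real.sqrt (r φ)) - Real.tan φ = G φ := by
      rw [Real.tan_eq_sin_div_cos, hG]
      have l1 : 2 * ((1 / (2 * Real.cos φ)) * Real.sqrt (r φ)) - Real.sin φ / Real.cos φ
          = (Real.sqrt (r φ) - Real.sin φ) / Real.cos φ := by
        field_simp
      rw [l1, div_eq_div_iff hcos.ne' hqs.ne']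
      have hS : Real.sin (θ φ) * (Real.sin (θ φ))⁻¹ = 1 := mul_inv_cancel₀ hsθ.ne'
      linear_combination hq2 + (1 / Real.sin (θ φ)) * hA - hP + hS
    have e2 : 2 * ((1 / (2 * Real.cos φ)) * Real.sqrt (r φ)) + Real.tan φ = H φ := by
      rw [Real.tan_eq_sin_div_cos, hH]
      field_simp
    rw [hrw, e1, e2]
  -- limits
  have hθlim : Tendsto θ (𝓝[s] (Real.pi/2)) (𝓝 a) := by
    have hc : Continuous θ := by
      rw [hθ]
      exact ((continuous_const.mul continuous_id).add continuous_const).div_const _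
    have := (hc.tendsto (Real.pi/2)).mono_left (nhdsWithin_le_nhds (s := s))
    convert this using 2
    rw [hθ, ha]; ring
  have hsθlim : Tendsto (fun φ => Real.sin (θ φ)) (𝓝[s] (Real.pi/2)) (𝓝 (Real.sin a)) :=
    (Real.continuous_sin.tendsto a).comp hθlim
  have h2θlim : Tendsto (fun φ => Real.sin (2 * φ - θ φ)) (𝓝[s] (Real.pi/2)) (𝓝 (Real.sin a)) := by
    have hc : Tendsto (fun φ : ℝ => 2 * φ - θ φ) (𝓝[s] (Real.pi/2)) (𝓝 (Real.pi - a)) := by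
      have h2φ : Tendsto (fun φ : ℝ => 2 * φ) (𝓝[s] (Real.pi/2)) (𝓝 Real.pi) := by
        have hc2 : Continuous (fun φ : ℝ => 2 * φ) := continuous_const.mul continuous_id
        have h := (hc2.tendsto (Real.pi/2)).mono_left (nhdsWithin_le_nhds (s := s))
        convert h using 2
        ring
      simpa using h2φ.sub hθlim
    have := (Real.continuous_sin.tendsto (Real.pi - a)).comp hc
    simpa [Real.sin_pi_sub, Function.comp_def] using this
  have hrlim : Tendsto r (𝓝[s] (Real.pi/2)) (𝓝 1) := by
    have := h2θlim.div hsθlim hsina.ne'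
    simpa [hr, div_self hsina.ne', Pi.div_def] using this
  have hqlim : Tendsto (fun φ => Real.sqrt (r φ)) (𝓝[s] (Real.pi/2)) (𝓝 1) := by
    have := (Real.continuous_sqrt.tendsto 1).comp hrlim
    simpa [Function.comp_def] using this
  have hsinlim : Tendsto (fun φ => Real.sin φ) (𝓝[s] (Real.pi/2)) (𝓝 1) := by
    have := (Real.continuous_sin.tendsto (Real.pi/2)).mono_left (nhdsWithin_le_nhds (s := s))
    simpa [Real.sin_pi_div_two] using this
  have hcoslim : Tendsto (fun φ => Real.cos φ) (𝓝[s] (Real.pi/2)) (𝓝 0) := by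
    have := (Real.continuous_cos.tendsto (Real.pi/2)).mono_left (nhdsWithin_le_nhds (s := s))
    simpa [Real.cos_pi_div_two] using this
  have hden : Tendsto (fun φ => Real.sqrt (r φ) + Real.sin φ) (𝓝[s] (Real.pi/2)) (𝓝 2) := by
    have := hqlim.add hsinlim
    norm_num at this
    exact this
  -- limit of G
  have hφθlim : Tendsto (fun φ => Real.sin (φ - θ φ)) (𝓝[s] (Real.pi/2)) (𝓝 (Real.cos a)) := by
    have hc : Tendsto (fun φ : ℝ => φ - θ φ) (𝓝[s] (Real.pi/2)) (𝓝 (Real.pi/2 - a)) := by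
      have hid : Tendsto (fun φ : ℝ => φ) (𝓝[s] (Real.pi/2)) (𝓝 (Real.pi/2)) :=
        (continuous_id.tendsto _).mono_left (nhdsWithin_le_nhds (s := s))
      exact hid.sub hθlim
    have := (Real.continuous_sin.tendsto (Real.pi/2 - a)).comp hc
    simpa [Real.sin_pi_div_two_sub, Function.comp_def] using this
  have hGlim : Tendsto G (𝓝[s] (Real.pi/2)) (𝓝 (Real.cos a / Real.sin a)) := by
    have hnum : Tendsto (fun φ => 2 * Real.sin (φ - θ φ) / Real.sin (θ φ) + Real.cos φ)
        (𝓝[s] (Real.pi/2)) (𝓝 (2 * Real.cos a / Real.sin a)) := by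
      have := ((hφθlim.const_mul 2).div hsθlim hsina.ne').add hcoslim
      simpa using this
    have := hnum.div hden (by norm_num)
    simp only [Pi.div_def] at this
    rw [hG]
    convert this using 2
    ring
  have harc1 : Tendsto (fun φ => Real.arctan (G φ)) (𝓝[s] (Real.pi/2))
      (𝓝 (Real.pi/2 - a)) := by
    have := (Real.continuous_arctan.tendsto _).comp hGlim
    have he : Real.arctan (Real.cos a / Real.sin a) = Real.pi/2 - a := by
      have : Real.cos a / Real.sin a = Real.tan (Real.pi/2 - a) := by
        rw [Real.tan_pi_div_two_sub, Real.tan_eq_sin_div_cos, inv_div]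
      rw [this, Real.arctan_tan (by linarith) (by linarith)]
    simpa [he, Function.comp_def] using this
  -- limit of H
  have hHtop : Tendsto H (𝓝[s] (Real.pi/2)) atTop := by
    have hcos' : Tendsto (fun φ => Real.cos φ) (𝓝[s] (Real.pi/2)) (𝓝[>] 0) := by
      rw [tendsto_nhdsWithin_iff]
      refine ⟨hcoslim, eventually_nhdsWithin_of_forall fun φ hφ => ?_⟩
      exact (hmem φ hφ).2.2.1
    have hinv : Tendsto (fun φ => (Real.cos φ)⁻¹) (𝓝[s] (Real.pi/2)) atTop :=
      tendsto_inv_nhdsGT_zero.comp hcos'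
    exact hden.pos_mul_atTop (by norm_num) hinv
  have harc2 : Tendsto (fun φ => Real.arctan (H φ)) (𝓝[s] (Real.pi/2))
      (𝓝 (Real.pi/2)) := by
    have := Real.tendsto_arctan_atTop.comp hHtop
    exact this.mono_right nhdsWithin_le_nhds
  have hfinal := harc1.add harc2
  have hval : Real.pi/2 - a + Real.pi/2 = Real.pi - ((m:ℝ) + 1) * Real.pi / (N:ℝ) := by
    rw [ha]; ring
  rw [hval] at hfinal
  exact hfinal.congr' (by
    filter_upwards [eventually_nhdsWithin_of_forall key] with φ h
    exact h.symm)
end
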